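/- arXiv:0806.0100 — 4 statements merged into one kernel-verified Lean document; each statement's English description precedes it below -/
import Mathlib

section
/- Let p ≥ 2 and α₁, α₂ > 0. Then there exists a constant c > 0, depending only on α₁, α₂ and p, with the following property: for all real numbers a, s, z, ψ₁ and all ψ₂ ≥ 0, if a·s ≤ −α₁|s|^p + ψ₁ and |a| ≤ α₂|s|^{p−1} + ψ₂, then a·(s − z) ≤ −(α₁/2)|s|^p + ψ₁ + (1/2)ψ₂² + (1/2)z² + c·|z|^p. -/
/-!
Write `a (s - z) ≤ a s + |a| |z|` and bound `|a| |z|` by the growth condition. The term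
`α₂ |s|^(p-1) |z|` is absorbed into half of the coercive term `α₁ |s|^p` by Young's inequality
with exponents `p / (p - 1)` and `p`, and `ψ₂ |z| ≤ (ψ₂² + z²) / 2`.
-/

open Real

theorem young_inequality_eps_of_nonneg {a b p q ε : ℝ} (ha : 0 ≤ a) (hb : 0 ≤ b)
    (hpq : p.HolderConjugate q) (hε : 0 < ε) :
    a * b ≤ ε * a ^ p + (ε * p) ^ (-(q / p)) / q * b ^ q := by
  have hεp : 0 < ε * p := mul_pos hε hpq.pos
  set t := (ε * p) ^ (1 / p) with ht
  have ht0 : 0 < t := rpow_pos_of_pos hεp _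
  have htp : t ^ p = ε * p := by
    rw [ht, ← rpow_mul hεp.le, one_div_mul_cancel hpq.ne_zero, rpow_one]
  have htq : t⁻¹ ^ q = (ε * p) ^ (-(q / p)) := by
    rw [ht, ← rpow_neg_one, ← rpow_mul hεp.le, ← rpow_mul hεp.le]
    ring_nf
  have young := young_inequality_of_nonneg (mul_nonneg ht0.le ha)
    (mul_nonneg (inv_nonneg.2 ht0.le) hb) hpq
  rw [mul_rpow ht0.le ha, mul_rpow (inv_nonneg.2 ht0.le) hb, htp, htq] at young
  calc a * b = t * a * (t⁻¹ * b) := by field_simp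
    _ ≤ ε * p * a ^ p / p + (ε * p) ^ (-(q / p)) * b ^ q / q := young
    _ = ε * a ^ p + (ε * p) ^ (-(q / p)) / q * b ^ q := by field_simp [hpq.ne_zero]

/-- Pointwise Young-type estimate for the FitzHugh–Nagumo nonlinearity:
if `p ≥ 2` and `α₁, α₂ > 0`, there is a constant `c > 0` depending only on `α₁, α₂, p` such
that whenever `a * s ≤ -α₁|s|^p + ψ₁` and `|a| ≤ α₂|s|^(p-1) + ψ₂` (with `ψ₂ ≥ 0`), one has
`a * (s - z) ≤ -(α₁/2)|s|^p + ψ₁ + ψ₂²/2 + z²/2 + c|z|^p`. -/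
theorem stmt0 (p α₁ α₂ : ℝ) (hp : 2 ≤ p) (hα₁ : 0 < α₁) (hα₂ : 0 < α₂) :
    ∃ c : ℝ, 0 < c ∧
      ∀ a s z ψ₁ ψ₂ : ℝ, 0 ≤ ψ₂ →
        a * s ≤ -α₁ * |s| ^ p + ψ₁ →
        |a| ≤ α₂ * |s| ^ (p - 1) + ψ₂ →
        a * (s - z) ≤ -(α₁ / 2) * |s| ^ p + ψ₁ + (1 / 2) * ψ₂ ^ 2
          + (1 / 2) * z ^ 2 + c * |z| ^ p := by
  set q := p / (p - 1)
  have hpq : p.HolderConjugate q := .conjExponent (by linarith)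
  set C := (α₁ / 2 * q) ^ (-(p / q)) / p
  have hC : 0 < C := by have := hpq.pos; have := hpq.symm.pos; positivity
  refine ⟨C * α₂ ^ p, by positivity, fun a s z ψ₁ ψ₂ hψ₂ hcoerc hgrowth => ?_⟩
  have hyoung : |s| ^ (p - 1) * (α₂ * |z|) ≤ α₁ / 2 * |s| ^ p + C * α₂ ^ p * |z| ^ p := by
    have := young_inequality_eps_of_nonneg (rpow_nonneg (abs_nonneg s) (p - 1))
      (mul_nonneg hα₂.le (abs_nonneg z)) hpq.symm (half_pos hα₁)
    rw [← rpow_mul (abs_nonneg s), hpq.sub_one_mul_conj, mul_rpow hα₂.le (abs_nonneg z)] at this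
    rwa [mul_assoc C]
  have hcross : a * (s - z) ≤ a * s + |a| * |z| := by
    linarith [neg_le_abs (a * z), abs_mul a z]
  have hgrowth_z := mul_le_mul_of_nonneg_right hgrowth (abs_nonneg z)
  have hψz : 2 * ψ₂ * |z| ≤ ψ₂ ^ 2 + z ^ 2 := sq_abs z ▸ two_mul_le_add_sq ψ₂ |z|
  linarith
end

section
/- There exists a constant c > 0 depending only on α₁, α₂ and p such that the following holds. Let f satisfy the dissipativity conditions, let u, z : ℝ^n → ℝ be measurable with u, z ∈ L²(ℝ^n) ∩ L^p(ℝ^n), and assume that x ↦ f(x, u(x))·(u(x) − z(x)) is integrable on ℝ^n. Then ∫_{ℝ^n} f(x, u(x))·(u(x) − z(x)) dx ≤ −(α₁/2)‖u‖_{L^p}^p + ‖ψ₁‖_{L¹} + (1/2)‖ψ₂‖_{L²}² + (1/2)‖z‖_{L²}² + c‖z‖_{L^p}^p. -/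
/-!
Pointwise, with `y = f(x, u(x))`, write `y (u - z) = y u - y z`. The first term is at most
`-α₁|u|^p + ψ₁` by dissipativity. For the second, `|y| |z| ≤ α₂ |u|^(p-1) |z| + ψ₂ |z|`: the
first product is split by a Young-type inequality `K a^(p-1) b ≤ ε a^p + ε (K/ε)^p b^p` with
`ε = α₁/2`, absorbing half of the dissipation, and the second by `ψ₂ |z| ≤ ψ₂²/2 + z²/2`.
Integrating the pointwise bound gives the estimate.
-/

open MeasureTheory

lemma Real.rpow_sub_one_mul_le_rpow_add_rpow {p a b : ℝ} (hp : 1 ≤ p) (ha : 0 ≤ a)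
    (hb : 0 ≤ b) :
    a ^ (p - 1) * b ≤ a ^ p + b ^ p := by
  have hm : 0 ≤ max a b := ha.trans (le_max_left a b)
  calc a ^ (p - 1) * b ≤ max a b ^ (p - 1) * max a b := by
        gcongr
        exacts [le_max_left a b, le_max_right a b]
    _ = max a b ^ p := by
        rw [← Real.rpow_add_one' hm (by linarith), sub_add_cancel]
    _ ≤ a ^ p + b ^ p := by
        rcases max_choice a b with h | h <;> rw [h] <;>
          linarith [Real.rpow_nonneg ha p, Real.rpow_nonneg hb p]

lemma Real.mul_rpow_sub_one_mul_le {p a b ε K : ℝ} (hp : 1 ≤ p) (ha : 0 ≤ a) (hb : 0 ≤ b)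
    (hε : 0 < ε) (hK : 0 ≤ K) :
    K * a ^ (p - 1) * b ≤ ε * a ^ p + ε * (K / ε) ^ p * b ^ p := by
  have hKε : 0 ≤ K / ε := by positivity
  have key := Real.rpow_sub_one_mul_le_rpow_add_rpow hp ha (mul_nonneg hKε hb)
  rw [Real.mul_rpow hKε hb] at key
  calc K * a ^ (p - 1) * b = ε * (a ^ (p - 1) * (K / ε * b)) := by field_simp
    _ ≤ ε * (a ^ p + (K / ε) ^ p * b ^ p) := by gcongr
    _ = ε * a ^ p + ε * (K / ε) ^ p * b ^ p := by ring

noncomputable def dissipativeConst (p α₁ α₂ : ℝ) : ℝ := α₁ / 2 * (2 * α₂ / α₁) ^ p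

lemma dissipativeConst_pos {p α₁ α₂ : ℝ} (hα₁ : 0 < α₁) (hα₂ : 0 < α₂) :
    0 < dissipativeConst p α₁ α₂ := by
  unfold dissipativeConst; positivity

lemma mul_sub_le_of_dissipative {p α₁ α₂ ψ₁ ψ₂ s t y : ℝ} (hp : 1 ≤ p) (hα₁ : 0 < α₁)
    (hα₂ : 0 ≤ α₂) (h₁ : y * s ≤ -α₁ * |s| ^ p + ψ₁) (h₂ : |y| ≤ α₂ * |s| ^ (p - 1) + ψ₂) :
    y * (s - t) ≤ -(α₁ / 2) * |s| ^ p + ψ₁ + 1 / 2 * ψ₂ ^ 2 + 1 / 2 * t ^ 2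
      + dissipativeConst p α₁ α₂ * |t| ^ p := by
  have hyt : -(y * t) ≤ (α₂ * |s| ^ (p - 1) + ψ₂) * |t| :=
    calc -(y * t) ≤ |y| * |t| := by rw [← abs_mul]; exact neg_le_abs _
      _ ≤ _ := by gcongr
  have young :
      α₂ * |s| ^ (p - 1) * |t| ≤ α₁ / 2 * |s| ^ p + dissipativeConst p α₁ α₂ * |t| ^ p := by
    have := Real.mul_rpow_sub_one_mul_le hp (abs_nonneg s) (abs_nonneg t) (half_pos hα₁) hα₂
    rwa [div_div_eq_mul_div, mul_comm α₂ 2] at this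
  have amgm : ψ₂ * |t| ≤ 1 / 2 * ψ₂ ^ 2 + 1 / 2 * t ^ 2 := by
    nlinarith [sq_nonneg (ψ₂ - |t|), sq_abs t]
  linarith

theorem integral_mul_sub_le_of_dissipative {α : Type*} [MeasurableSpace α] {μ : Measure α}
    {p α₁ α₂ : ℝ} {f : α → ℝ → ℝ} {ψ₁ ψ₂ u z : α → ℝ} (hp : 1 ≤ p) (hα₁ : 0 < α₁)
    (hα₂ : 0 ≤ α₂) (hψ₁ : Integrable ψ₁ μ) (hψ₂ : MemLp ψ₂ 2 μ)
    (hf₁ : ∀ x s, f x s * s ≤ -α₁ * |s| ^ p + ψ₁ x)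
    (hf₂ : ∀ x s, |f x s| ≤ α₂ * |s| ^ (p - 1) + ψ₂ x)
    (hu : MemLp u (ENNReal.ofReal p) μ) (hz₂ : MemLp z 2 μ) (hzp : MemLp z (ENNReal.ofReal p) μ)
    (hint : Integrable (fun x => f x (u x) * (u x - z x)) μ) :
    ∫ x, f x (u x) * (u x - z x) ∂μ ≤
      -(α₁ / 2) * (∫ x, |u x| ^ p ∂μ) + (∫ x, |ψ₁ x| ∂μ)
        + (1 / 2) * (∫ x, (ψ₂ x) ^ 2 ∂μ) + (1 / 2) * (∫ x, (z x) ^ 2 ∂μ)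
        + dissipativeConst p α₁ α₂ * (∫ x, |z x| ^ p ∂μ) := by
  have integrable_abs_rpow {g : α → ℝ} (hg : MemLp g (ENNReal.ofReal p) μ) :
      Integrable (fun x => |g x| ^ p) μ := by
    simpa [ENNReal.toReal_ofReal (by linarith : 0 ≤ p), Real.norm_eq_abs] using
      hg.integrable_norm_rpow (ENNReal.ofReal_pos.mpr (by linarith)).ne' ENNReal.ofReal_ne_top
  have hu' := integrable_abs_rpow hu
  have hz' := integrable_abs_rpow hzp
  have hψ₂' := hψ₂.integrable_sq
  have hz₂' := hz₂.integrable_sq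
  have hψ₁' := hψ₁.abs
  calc ∫ x, f x (u x) * (u x - z x) ∂μ
      ≤ ∫ x, -(α₁ / 2) * |u x| ^ p + |ψ₁ x| + 1 / 2 * ψ₂ x ^ 2 + 1 / 2 * z x ^ 2
          + dissipativeConst p α₁ α₂ * |z x| ^ p ∂μ := by
        refine integral_mono hint (by fun_prop) fun x => ?_
        exact (mul_sub_le_of_dissipative hp hα₁ hα₂ (hf₁ x (u x)) (hf₂ x (u x))).trans
          (by gcongr; exact le_abs_self _)
    _ = _ := by
        rw [integral_add (by fun_prop) (by fun_prop), integral_add (by fun_prop) (by fun_prop),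
          integral_add (by fun_prop) (by fun_prop), integral_add (by fun_prop) (by fun_prop),
          integral_const_mul, integral_const_mul, integral_const_mul, integral_const_mul]

/-- Integral estimate for the nonlinear term: there is `c > 0` depending only
on `α₁, α₂, p` such that for any `f` satisfying the dissipativity conditions and any
`u, z ∈ L²(ℝ^n) ∩ L^p(ℝ^n)` with `x ↦ f(x,u(x))·(u(x)−z(x))` integrable,
`∫ f(x,u(x))(u(x)−z(x)) dx ≤ −(α₁/2)‖u‖_p^p + ‖ψ₁‖_1 + ‖ψ₂‖_2²/2 + ‖z‖_2²/2 + c‖z‖_p^p`. -/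
theorem stmt1 (p α₁ α₂ : ℝ) (hp : 2 ≤ p) (hα₁ : 0 < α₁) (hα₂ : 0 < α₂) :
    ∃ c : ℝ, 0 < c ∧
      ∀ (n : ℕ) (q : ℝ) (f : EuclideanSpace ℝ (Fin n) → ℝ → ℝ)
        (ψ₁ ψ₂ u z : EuclideanSpace ℝ (Fin n) → ℝ),
        1 ≤ n →
        1 / p + 1 / q = 1 →
        Continuous (fun xs : EuclideanSpace ℝ (Fin n) × ℝ => f xs.1 xs.2) →
        MemLp ψ₁ 1 volume → MemLp ψ₁ ⊤ volume →
        MemLp ψ₂ 2 volume → MemLp ψ₂ (ENNReal.ofReal q) volume →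
        (∀ x, 0 ≤ ψ₂ x) →
        (∀ x s, f x s * s ≤ -α₁ * |s| ^ p + ψ₁ x) →
        (∀ x s, |f x s| ≤ α₂ * |s| ^ (p - 1) + ψ₂ x) →
        Measurable u → Measurable z →
        MemLp u 2 volume → MemLp u (ENNReal.ofReal p) volume →
        MemLp z 2 volume → MemLp z (ENNReal.ofReal p) volume →
        Integrable (fun x => f x (u x) * (u x - z x)) volume →
        (∫ x, f x (u x) * (u x - z x)) ≤
          -(α₁ / 2) * (∫ x, |u x| ^ p) + (∫ x, |ψ₁ x|)
            + (1 / 2) * (∫ x, (ψ₂ x) ^ 2) + (1 / 2) * (∫ x, (z x) ^ 2)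
            + c * (∫ x, |z x| ^ p) := by
  refine ⟨dissipativeConst p α₁ α₂, dissipativeConst_pos hα₁ hα₂, ?_⟩
  intro n q f ψ₁ ψ₂ u z _ _ _ hψ₁ _ hψ₂ _ _ hf₁ hf₂ _ _ _ hu hz₂ hzp hint
  exact integral_mul_sub_le_of_dissipative (by linarith) hα₁ hα₂.le
    (memLp_one_iff_integrable.mp hψ₁) hψ₂ hf₁ hf₂ hu hz₂ hzp hint
end

section
/- Let f satisfy the dissipativity conditions, and let c₄, c₅ be the constants from the energy differential inequality (depending only on λ, α, δ, β, α₁, α₂, p, ‖g‖_{L²}, ‖h‖_{L²}, ‖ψ₁‖_{L¹}, ‖ψ₂‖_{L²}). Then every regular solution (ũ, ṽ) of the transformed FitzHugh–Nagumo system satisfies, for all 0 ≤ T₁ ≤ t: β‖ũ(t)‖_{L²}² + α‖ṽ(t)‖_{L²}² + ∫_{T₁}^t e^{η(s−t)}(β‖∇ũ(s)‖_{L²}² + α₁‖u(s)‖_{L^p}^p) ds ≤ e^{η(T₁−t)}(β‖ũ(T₁)‖_{L²}² + α‖ṽ(T₁)‖_{L²}²) + ∫_{T₁}^t e^{η(s−t)}(c₄·P(s)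 + c₅) ds. -/
open MeasureTheory Set
noncomputable section

/-- The Laplacian of a function on `ℝ^n`, as the sum of its second partial derivatives. -/
def lap {n : ℕ} (u : EuclideanSpace ℝ (Fin n) → ℝ) (x : EuclideanSpace ℝ (Fin n)) : ℝ :=
  ∑ i : Fin n, fderiv ℝ (fun y => fderiv ℝ u y (EuclideanSpace.single i 1)) x
    (EuclideanSpace.single i 1)

/-- A regular solution of the transformed FitzHugh–Nagumo system
`dũ/dt = −λũ + Δũ − αṽ + f(·, ũ + Z₁) + g + ΔZ₁ − αZ₂`,
`dṽ/dt = −δṽ + βũ + h + βZ₁` on `[0,∞)`: the curves `t ↦ ũ(t), ṽ(t)` are continuously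
differentiable in `L²(ℝ^n)` (the curves `U, V` with derivatives `U', V'`), with pointwise
representatives `ut, vt` enjoying the stated space regularity and memberships, the stated
norm maps are continuous, and the equations hold in `L²(ℝ^n)` for every `t ≥ 0`. -/
structure RegularSolution (n : ℕ) (p lam α δ β : ℝ)
    (f : EuclideanSpace ℝ (Fin n) → ℝ → ℝ) (g h : EuclideanSpace ℝ (Fin n) → ℝ)
    (Z₁ Z₂ : ℝ → EuclideanSpace ℝ (Fin n) → ℝ) : Type where
  ut : ℝ → EuclideanSpace ℝ (Fin n) → ℝ
  vt : ℝ → EuclideanSpace ℝ (Fin n) → ℝ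
  U : ℝ → Lp ℝ 2 (volume : Measure (EuclideanSpace ℝ (Fin n)))
  V : ℝ → Lp ℝ 2 (volume : Measure (EuclideanSpace ℝ (Fin n)))
  U' : ℝ → Lp ℝ 2 (volume : Measure (EuclideanSpace ℝ (Fin n)))
  V' : ℝ → Lp ℝ 2 (volume : Measure (EuclideanSpace ℝ (Fin n)))
  hU : ∀ t, ⇑(U t) =ᵐ[volume] ut t
  hV : ∀ t, ⇑(V t) =ᵐ[volume] vt t
  hU' : ∀ t ≥ 0, HasDerivWithinAt U (U' t) (Ici 0) t
  hV' : ∀ t ≥ 0, HasDerivWithinAt V (V' t) (Ici 0) t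
  contU' : ContinuousOn U' (Ici 0)
  contV' : ContinuousOn V' (Ici 0)
  smooth_ut : ∀ t ≥ 0, ContDiff ℝ 2 (ut t)
  smooth_Z₁ : ∀ t ≥ 0, ContDiff ℝ 2 (Z₁ t)
  mem_ut : ∀ t ≥ 0, MemLp (ut t) 2 volume
  mem_grad_ut : ∀ t ≥ 0, MemLp (fun x => gradient (ut t) x) 2 volume
  mem_lap_ut : ∀ t ≥ 0, MemLp (lap (ut t)) 2 volume
  mem_Z₁ : ∀ t ≥ 0, MemLp (Z₁ t) 2 volume
  mem_grad_Z₁ : ∀ t ≥ 0, MemLp (fun x => gradient (Z₁ t) x) 2 volume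
  mem_lap_Z₁ : ∀ t ≥ 0, MemLp (lap (Z₁ t)) 2 volume
  mem_ut_p : ∀ t ≥ 0, MemLp (ut t) (ENNReal.ofReal p) volume
  mem_u_p : ∀ t ≥ 0, MemLp (fun x => ut t x + Z₁ t x) (ENNReal.ofReal p) volume
  mem_Z₁_p : ∀ t ≥ 0, MemLp (Z₁ t) (ENNReal.ofReal p) volume
  mem_Z₂ : ∀ t ≥ 0, MemLp (Z₂ t) 2 volume
  mem_f : ∀ t ≥ 0, MemLp (fun x => f x (ut t x + Z₁ t x)) 2 volume
  cont_grad_ut : ContinuousOn (fun t => ∫ x, ‖gradient (ut t) x‖ ^ 2) (Ici 0)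
  cont_u_p : ContinuousOn (fun t => ∫ x, |ut t x + Z₁ t x| ^ p) (Ici 0)
  cont_Z₁_p : ContinuousOn (fun t => ∫ x, |Z₁ t x| ^ p) (Ici 0)
  cont_Z₁ : ContinuousOn (fun t => ∫ x, (Z₁ t x) ^ 2) (Ici 0)
  cont_grad_Z₁ : ContinuousOn (fun t => ∫ x, ‖gradient (Z₁ t) x‖ ^ 2) (Ici 0)
  cont_lap_Z₁ : ContinuousOn (fun t => ∫ x, (lap (Z₁ t) x) ^ 2) (Ici 0)
  cont_Z₂ : ContinuousOn (fun t => ∫ x, (Z₂ t x) ^ 2) (Ici 0)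
  equ : ∀ t ≥ 0, ⇑(U' t) =ᵐ[volume] fun x =>
    -lam * ut t x + lap (ut t) x - α * vt t x + f x (ut t x + Z₁ t x) + g x
      + lap (Z₁ t) x - α * Z₂ t x
  eqv : ∀ t ≥ 0, ⇑(V' t) =ᵐ[volume] fun x =>
    -δ * vt t x + β * ut t x + h x + β * Z₁ t x

/-!
Multiplying the differential inequality `E' + ηE + G ≤ R` by the integrating factor
`e^{η(s-t)}` turns its left side into the derivative of
`s ↦ e^{η(s-t)} E(s) + ∫_{T₁}^s e^{η(r-t)} (G r - R r) dr`, which is therefore antitone on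
`[T₁, t]`; comparing its values at the endpoints is the claim. The energy inequality has this
form with `η = min(λ, δ)`, because `η E ≤ λβ‖ũ‖² + αδ‖ṽ‖²`.
-/

open Real intervalIntegral

lemma min_mul_add_le {a b x y : ℝ} (hx : 0 ≤ x) (hy : 0 ≤ y) :
    min a b * (x + y) ≤ a * x + b * y := by
  rw [mul_add]
  exact add_le_add (mul_le_mul_of_nonneg_right (min_le_left _ _) hx)
    (mul_le_mul_of_nonneg_right (min_le_right _ _) hy)

section IntegratingFactor

variable {η a b : ℝ} {E G R : ℝ → ℝ}

lemma hasDerivAt_exp_mul_add_integral {E' s : ℝ} (hG : ContinuousOn G (Icc a b))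
    (hR : ContinuousOn R (Icc a b)) (hs : s ∈ Ioo a b) (hE : HasDerivAt E E' s) :
    HasDerivAt
      (fun r => exp (η * (r - b)) * E r + ∫ x in a..r, exp (η * (x - b)) * (G x - R x))
      (exp (η * (s - b)) * (E' + η * E s + G s - R s)) s := by
  have hφ : ContinuousOn (fun x => exp (η * (x - b)) * (G x - R x)) (Icc a b) :=
    (by fun_prop : Continuous fun x => exp (η * (x - b))).continuousOn.mul (hG.sub hR)
  have hexp : HasDerivAt (fun r => exp (η * (r - b))) (exp (η * (s - b)) * η) s := by
    simpa using (((hasDerivAt_id s).sub_const b).const_mul η).exp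
  have hint : HasDerivAt (fun r => ∫ x in a..r, exp (η * (x - b)) * (G x - R x))
      (exp (η * (s - b)) * (G s - R s)) s :=
    integral_hasDerivAt_right
      ((hφ.mono (uIcc_of_le hs.1.le ▸ Icc_subset_Icc_right hs.2.le)).intervalIntegrable)
      ((hφ.mono Ioo_subset_Icc_self).stronglyMeasurableAtFilter isOpen_Ioo s hs)
      (hφ.continuousAt (Icc_mem_nhds hs.1 hs.2))
  exact ((hexp.mul hE).add hint).congr_deriv (by ring)

lemma add_integral_exp_mul_le_of_hasDerivAt (hab : a ≤ b) (hE : ContinuousOn E (Icc a b))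
    (hG : ContinuousOn G (Icc a b)) (hR : ContinuousOn R (Icc a b))
    (hderiv : ∀ s ∈ Ioo a b, ∃ E', HasDerivAt E E' s ∧ E' + η * E s + G s ≤ R s) :
    E b + ∫ s in a..b, exp (η * (s - b)) * G s
      ≤ exp (η * (a - b)) * E a + ∫ s in a..b, exp (η * (s - b)) * R s := by
  set F := fun r => exp (η * (r - b)) * E r + ∫ x in a..r, exp (η * (x - b)) * (G x - R x)
  have hw : Continuous fun x => exp (η * (x - b)) := by fun_prop
  have hint : ∀ K : ℝ → ℝ, ContinuousOn K (Icc a b) →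
      IntervalIntegrable (fun x => exp (η * (x - b)) * K x) volume a b := fun K hK =>
    (hw.continuousOn.mul hK).intervalIntegrable_of_Icc hab
  have hF : ContinuousOn F (Icc a b) := by
    refine (hw.continuousOn.mul hE).add ?_
    exact uIcc_of_le hab ▸
      continuousOn_primitive_interval' (hint (fun x => G x - R x) (hG.sub hR)) left_mem_uIcc
  have hF' : ∀ s ∈ Ioo a b, ∃ F', HasDerivAt F F' s ∧ F' ≤ 0 := fun s hs => by
    obtain ⟨E', hE', hle⟩ := hderiv s hs
    exact ⟨_, hasDerivAt_exp_mul_add_integral hG hR hs hE',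
      mul_nonpos_of_nonneg_of_nonpos (exp_pos _).le (by linarith)⟩
  have hanti : AntitoneOn F (Icc a b) := by
    refine antitoneOn_of_deriv_nonpos (convex_Icc a b) hF (fun s hs => ?_) (fun s hs => ?_) <;>
      rw [interior_Icc] at hs <;> obtain ⟨F', hd, hle⟩ := hF' s hs
    · exact hd.differentiableAt.differentiableWithinAt
    · exact hd.deriv ▸ hle
  have hFba : F b ≤ F a := hanti (left_mem_Icc.2 hab) (right_mem_Icc.2 hab) hab
  have hsplit : ∫ x in a..b, exp (η * (x - b)) * (G x - R x)
      = (∫ x in a..b, exp (η * (x - b)) * G x) - ∫ x in a..b, exp (η * (x - b)) * R x := by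
    rw [← integral_sub (hint G hG) (hint R hR)]
    simp only [mul_sub]
  simp only [F, sub_self, mul_zero, exp_zero, one_mul, integral_same, add_zero, hsplit] at hFba
  linarith

end IntegratingFactor

theorem stmt6_general (n : ℕ) (p lam α δ β α₁ η : ℝ)
    (hα : 0 < α) (hβ : 0 < β) (hη : η = min lam δ)
    (g h : EuclideanSpace ℝ (Fin n) → ℝ)
    (f : EuclideanSpace ℝ (Fin n) → ℝ → ℝ)
    (Z₁ Z₂ : ℝ → EuclideanSpace ℝ (Fin n) → ℝ)
    (sol : RegularSolution n p lam α δ β f g h Z₁ Z₂)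
    (c₄ c₅ : ℝ)
    (hineq : ∀ t ≥ (0 : ℝ), ∃ E' : ℝ,
      HasDerivWithinAt
        (fun s => β * (∫ x, (sol.ut s x) ^ 2) + α * (∫ x, (sol.vt s x) ^ 2))
        E' (Ici 0) t ∧
      E' + lam * β * (∫ x, (sol.ut t x) ^ 2) + α * δ * (∫ x, (sol.vt t x) ^ 2)
          + β * (∫ x, ‖gradient (sol.ut t) x‖ ^ 2)
          + α₁ * (∫ x, |sol.ut t x + Z₁ t x| ^ p)
        ≤ c₄ * ((∫ x, |Z₁ t x| ^ p) + (∫ x, (Z₁ t x) ^ 2)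
            + (∫ x, ‖gradient (Z₁ t) x‖ ^ 2) + (∫ x, (Z₂ t x) ^ 2)) + c₅) :
    ∀ T₁ t : ℝ, 0 ≤ T₁ → T₁ ≤ t →
      β * (∫ x, (sol.ut t x) ^ 2) + α * (∫ x, (sol.vt t x) ^ 2)
          + (∫ s in T₁..t, Real.exp (η * (s - t)) *
              (β * (∫ x, ‖gradient (sol.ut s) x‖ ^ 2)
                + α₁ * (∫ x, |sol.ut s x + Z₁ s x| ^ p)))
        ≤ Real.exp (η * (T₁ - t)) *
            (β * (∫ x, (sol.ut T₁ x) ^ 2) + α * (∫ x, (sol.vt T₁ x) ^ 2))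
          + ∫ s in T₁..t, Real.exp (η * (s - t)) *
              (c₄ * ((∫ x, |Z₁ s x| ^ p) + (∫ x, (Z₁ s x) ^ 2)
                + (∫ x, ‖gradient (Z₁ s) x‖ ^ 2) + (∫ x, (Z₂ s x) ^ 2)) + c₅) := by
  intro T₁ t hT₁ hTt
  have hsub : Icc T₁ t ⊆ Ici 0 := fun s hs => hT₁.trans hs.1
  refine add_integral_exp_mul_le_of_hasDerivAt hTt
    (E := fun s => β * (∫ x, (sol.ut s x) ^ 2) + α * (∫ x, (sol.vt s x) ^ 2))
    (G := fun s => β * (∫ x, ‖gradient (sol.ut s) x‖ ^ 2)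
      + α₁ * (∫ x, |sol.ut s x + Z₁ s x| ^ p))
    (R := fun s => c₄ * ((∫ x, |Z₁ s x| ^ p) + (∫ x, (Z₁ s x) ^ 2)
      + (∫ x, ‖gradient (Z₁ s) x‖ ^ 2) + (∫ x, (Z₂ s x) ^ 2)) + c₅) ?_ ?_ ?_ ?_
  · exact fun s hs => (hineq s (hsub hs)).choose_spec.1.continuousWithinAt.mono hsub
  · exact ((continuousOn_const.mul sol.cont_grad_ut).add
      (continuousOn_const.mul sol.cont_u_p)).mono hsub
  · exact ((continuousOn_const.mul (((sol.cont_Z₁_p.add sol.cont_Z₁).add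
      sol.cont_grad_Z₁).add sol.cont_Z₂)).add continuousOn_const).mono hsub
  intro s hs
  have hs₀ : 0 < s := hT₁.trans_lt hs.1
  obtain ⟨E', hE', hle⟩ := hineq s hs₀.le
  refine ⟨E', hE'.hasDerivAt (Ici_mem_nhds hs₀), ?_⟩
  have hdamp := hη ▸ min_mul_add_le (a := lam) (b := δ)
    (mul_nonneg hβ.le (integral_nonneg (μ := volume) fun x => sq_nonneg (sol.ut s x)))
    (mul_nonneg hα.le (integral_nonneg (μ := volume) fun x => sq_nonneg (sol.vt s x)))
  linarith

/-- Integrated energy inequality: if `c₄, c₅ > 0` are constants for which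
the energy differential inequality holds along a regular solution `(ũ, ṽ)` of the
transformed FitzHugh–Nagumo system, then for all `0 ≤ T₁ ≤ t`, with `η = min(λ,δ)`,
`β‖ũ(t)‖₂² + α‖ṽ(t)‖₂² + ∫_{T₁}^t e^{η(s−t)}(β‖∇ũ(s)‖₂² + α₁‖u(s)‖_p^p) ds
  ≤ e^{η(T₁−t)}(β‖ũ(T₁)‖₂² + α‖ṽ(T₁)‖₂²) + ∫_{T₁}^t e^{η(s−t)}(c₄ P(s) + c₅) ds`. -/
theorem stmt6 (n : ℕ) (p q lam α δ β α₁ α₂ η : ℝ) (hn : 1 ≤ n)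
    (hp : 2 ≤ p) (hpq : 1 / p + 1 / q = 1)
    (hlam : 0 < lam) (hα : 0 < α) (hδ : 0 < δ) (hβ : 0 < β)
    (hα₁ : 0 < α₁) (hα₂ : 0 < α₂) (hη : η = min lam δ)
    (g h ψ₁ ψ₂ : EuclideanSpace ℝ (Fin n) → ℝ)
    (hg : MemLp g 2 volume) (hh : MemLp h 2 volume)
    (hψ₁_1 : MemLp ψ₁ 1 volume) (hψ₁_inf : MemLp ψ₁ ⊤ volume)
    (hψ₂_2 : MemLp ψ₂ 2 volume) (hψ₂_q : MemLp ψ₂ (ENNReal.ofReal q) volume)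
    (hψ₂_nonneg : ∀ x, 0 ≤ ψ₂ x)
    (f : EuclideanSpace ℝ (Fin n) → ℝ → ℝ)
    (hf_cont : Continuous (fun xs : EuclideanSpace ℝ (Fin n) × ℝ => f xs.1 xs.2))
    (hf_diss : ∀ x s, f x s * s ≤ -α₁ * |s| ^ p + ψ₁ x)
    (hf_growth : ∀ x s, |f x s| ≤ α₂ * |s| ^ (p - 1) + ψ₂ x)
    (Z₁ Z₂ : ℝ → EuclideanSpace ℝ (Fin n) → ℝ)
    (sol : RegularSolution n p lam α δ β f g h Z₁ Z₂)
    (c₄ c₅ : ℝ) (hc₄ : 0 < c₄) (hc₅ : 0 < c₅)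
    (hineq : ∀ t ≥ (0 : ℝ), ∃ E' : ℝ,
      HasDerivWithinAt
        (fun s => β * (∫ x, (sol.ut s x) ^ 2) + α * (∫ x, (sol.vt s x) ^ 2))
        E' (Ici 0) t ∧
      E' + lam * β * (∫ x, (sol.ut t x) ^ 2) + α * δ * (∫ x, (sol.vt t x) ^ 2)
          + β * (∫ x, ‖gradient (sol.ut t) x‖ ^ 2)
          + α₁ * (∫ x, |sol.ut t x + Z₁ t x| ^ p)
        ≤ c₄ * ((∫ x, |Z₁ t x| ^ p) + (∫ x, (Z₁ t x) ^ 2)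
            + (∫ x, ‖gradient (Z₁ t) x‖ ^ 2) + (∫ x, (Z₂ t x) ^ 2)) + c₅) :
    ∀ T₁ t : ℝ, 0 ≤ T₁ → T₁ ≤ t →
      β * (∫ x, (sol.ut t x) ^ 2) + α * (∫ x, (sol.vt t x) ^ 2)
          + (∫ s in T₁..t, Real.exp (η * (s - t)) *
              (β * (∫ x, ‖gradient (sol.ut s) x‖ ^ 2)
                + α₁ * (∫ x, |sol.ut s x + Z₁ s x| ^ p)))
        ≤ Real.exp (η * (T₁ - t)) *
            (β * (∫ x, (sol.ut T₁ x) ^ 2) + α * (∫ x, (sol.vt T₁ x) ^ 2))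
          + ∫ s in T₁..t, Real.exp (η * (s - t)) *
              (c₄ * ((∫ x, |Z₁ s x| ^ p) + (∫ x, (Z₁ s x) ^ 2)
                + (∫ x, ‖gradient (Z₁ s) x‖ ^ 2) + (∫ x, (Z₂ s x) ^ 2)) + c₅) :=
  stmt6_general n p lam α δ β α₁ η hα hβ hη g h f Z₁ Z₂ sol c₄ c₅ hineq
end
end

section
/- Let ρ : [0,∞) → [0,1] be C¹ with ρ(s) = 0 for s ≤ 1, ρ(s) = 1 for s ≥ 2, and |ρ′(s)| ≤ c₀ for all s ≥ 0, and for k > 0 set ρ_k(x) = ρ(|x|²/k²). Then for every k > 0 and every u ∈ C²(ℝ^n) with u, ∇u, Δu ∈ L²(ℝ^n): −∫_{ℝ^n} ρ_k(x)·u(x)·Δu(x) dx ≥ ∫_{ℝ^n} ρ_k(x)·|∇u(x)|² dx − (2√2·c₀/k)·(‖u‖_{L²}² + ‖∇u‖_{L²}²). -/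
open MeasureTheory Set
noncomputable section

/-!
Green's identity `∫ w Δu = -∫ ∇w · ∇u` holds on all of `ℝ^n` as soon as `w Δu`, `∇w · ∇u` and
`w |∇u|` are integrable: apply it to `χ_j w` for the rescaled bumps `χ_j(x) = b(x / j)`, which have
compact support and gradients of size `O(1/j)`, and let `j → ∞` by dominated convergence.
For `w = ρ_k u` this gives `-∫ ρ_k u Δu = ∫ ρ_k |∇u|² + ∫ u ∇ρ_k · ∇u`. Since `ρ′(|x|²/k²)` vanishes
for `|x| > √2 k`, `|∇ρ_k| ≤ 2√2 c₀ / k`, and `|u| |∇u| ≤ u² + |∇u|²` bounds the cross term.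
-/

open Filter Topology

section Cutoff

variable {E : Type*} [NormedAddCommGroup E] [NormedSpace ℝ E] [HasContDiffBump E]

def bumpCutoff (b : ContDiffBump (0 : E)) (R : ℝ) (x : E) : ℝ := b (R⁻¹ • x)

variable (b : ContDiffBump (0 : E))

theorem contDiff_bumpCutoff {n : ℕ∞} (R : ℝ) : ContDiff ℝ n (bumpCutoff b R) :=
  b.contDiff.comp (contDiff_const_smul R⁻¹)

theorem hasCompactSupport_bumpCutoff [FiniteDimensional ℝ E] {R : ℝ} (hR : R ≠ 0) :
    HasCompactSupport (bumpCutoff b R) :=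
  b.hasCompactSupport.comp_smul (inv_ne_zero hR)

theorem bumpCutoff_mem_Icc (R : ℝ) (x : E) : bumpCutoff b R x ∈ Icc 0 1 :=
  ⟨b.nonneg, b.le_one⟩

theorem tendsto_bumpCutoff_atTop (x : E) :
    Tendsto (fun R => bumpCutoff b R x) atTop (𝓝 1) := by
  have h0 : Tendsto (fun R : ℝ => R⁻¹ • x) atTop (𝓝 0) := by
    simpa using tendsto_inv_atTop_zero.smul_const (M := ℝ) x
  have hb0 : b 0 = 1 := b.one_of_mem_closedBall (Metric.mem_closedBall_self b.rIn_pos.le)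
  exact hb0 ▸ (b.continuous.tendsto 0).comp h0

theorem exists_norm_fderiv_bumpCutoff_le [FiniteDimensional ℝ E] :
    ∃ C, ∀ (R : ℝ) (x : E), ‖fderiv ℝ (bumpCutoff b R) x‖ ≤ C / |R| := by
  obtain ⟨C, hC⟩ := ((b.contDiff (n := 1)).continuous_fderiv
    one_ne_zero).bounded_above_of_compact_support (b.hasCompactSupport.fderiv (𝕜 := ℝ))
  refine ⟨C, fun R x => ?_⟩
  rw [show bumpCutoff b R = fun y => b (R⁻¹ • y) from rfl, fderiv_comp_smul, norm_smul,
    norm_inv, Real.norm_eq_abs, div_eq_inv_mul]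
  exact mul_le_mul_of_nonneg_left (hC _) (by positivity)

end Cutoff

theorem tendsto_integral_mul_of_tendsto_one {α : Type*} [MeasurableSpace α] {μ : Measure α}
    {χ : ℕ → α → ℝ} {f : α → ℝ} (hf : Integrable f μ)
    (hχ_meas : ∀ j, AEStronglyMeasurable (χ j) μ) (hχ_le : ∀ j x, ‖χ j x‖ ≤ 1)
    (hχ_lim : ∀ x, Tendsto (fun j => χ j x) atTop (𝓝 1)) :
    Tendsto (fun j => ∫ x, χ j x * f x ∂μ) atTop (𝓝 (∫ x, f x ∂μ)) := by
  refine tendsto_integral_of_dominated_convergence (fun x => ‖f x‖)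
    (fun j => (hχ_meas j).mul hf.aestronglyMeasurable) hf.norm
    (fun j => Eventually.of_forall fun x => ?_) (Eventually.of_forall fun x => ?_)
  · rw [norm_mul]
    exact mul_le_of_le_one_left (norm_nonneg _) (hχ_le j x)
  · simpa using (hχ_lim x).mul_const (f x)

theorem abs_integral_mul_apply_le {α : Type*} {F : Type*} [MeasurableSpace α] {μ : Measure α}
    [NormedAddCommGroup F] [NormedSpace ℝ F] {f : α → ℝ} {g : α → F} {L : α → F →L[ℝ] ℝ}
    {B : ℝ} (hf : MemLp f 2 μ) (hg : MemLp g 2 μ) (hL : ∀ x, ‖L x‖ ≤ B) :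
    |∫ x, f x * L x (g x) ∂μ| ≤ B * ((∫ x, f x ^ 2 ∂μ) + ∫ x, ‖g x‖ ^ 2 ∂μ) := by
  rw [← integral_add hf.integrable_sq hg.norm.integrable_sq, ← integral_const_mul,
    ← Real.norm_eq_abs]
  refine norm_integral_le_of_norm_le
    ((hf.integrable_sq.add hg.norm.integrable_sq).const_mul B) (Eventually.of_forall fun x => ?_)
  have hB : 0 ≤ B := (norm_nonneg _).trans (hL x)
  calc ‖f x * L x (g x)‖ ≤ ‖f x‖ * (B * ‖g x‖) := by
        rw [norm_mul]
        exact mul_le_mul_of_nonneg_left ((L x).le_of_opNorm_le (hL x) _) (norm_nonneg _)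
    _ ≤ B * (f x ^ 2 + ‖g x‖ ^ 2) := by
        rw [← sq_abs, ← Real.norm_eq_abs]
        nlinarith [mul_nonneg hB (sq_nonneg (‖f x‖ - ‖g x‖)), mul_nonneg hB (norm_nonneg (f x)),
          norm_nonneg (g x)]

theorem ContDiff.continuous_gradient {E : Type*} [NormedAddCommGroup E] [InnerProductSpace ℝ E]
    [CompleteSpace E] {u : E → ℝ} (hu : ContDiff ℝ 1 u) : Continuous (gradient u) :=
  (InnerProductSpace.toDual ℝ E).symm.continuous.comp (hu.continuous_fderiv one_ne_zero)

section Green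

variable {n : ℕ}

theorem sum_apply_single_mul_fderiv (L : EuclideanSpace ℝ (Fin n) →L[ℝ] ℝ)
    (u : EuclideanSpace ℝ (Fin n) → ℝ) (x : EuclideanSpace ℝ (Fin n)) :
    ∑ i, L (EuclideanSpace.single i 1) * fderiv ℝ u x (EuclideanSpace.single i 1) =
      L (gradient u x) := by
  conv_rhs => rw [← (EuclideanSpace.basisFun (Fin n) ℝ).sum_repr' (gradient u x)]
  simp [map_sum, inner_gradient_right, mul_comm]

theorem integral_mul_lap_of_hasCompactSupport {φ u : EuclideanSpace ℝ (Fin n) → ℝ}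
    (hφ : ContDiff ℝ 1 φ) (hφc : HasCompactSupport φ) (hu : ContDiff ℝ 2 u) :
    ∫ x, φ x * lap u x = -∫ x, fderiv ℝ φ x (gradient u x) := by
  set e : Fin n → EuclideanSpace ℝ (Fin n) := fun i => EuclideanSpace.single i 1
  have hdu : ∀ i, ContDiff ℝ 1 fun y => fderiv ℝ u y (e i) := fun i =>
    (hu.fderiv_right (by norm_num)).clm_apply contDiff_const
  have hint_left : ∀ i,
      Integrable fun x => φ x * fderiv ℝ (fun y => fderiv ℝ u y (e i)) x (e i) :=
    fun i => (hφ.continuous.mul (((hdu i).continuous_fderiv one_ne_zero).clm_apply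
      continuous_const)).integrable_of_hasCompactSupport hφc.mul_right
  have hint_right : ∀ i, Integrable fun x => fderiv ℝ φ x (e i) * fderiv ℝ u x (e i) :=
    fun i => (((hφ.continuous_fderiv one_ne_zero).clm_apply continuous_const).mul
      (hdu i).continuous).integrable_of_hasCompactSupport
        (hφc.fderiv_apply (𝕜 := ℝ) (e i)).mul_right
  have hibp : ∀ i, ∫ x, φ x * fderiv ℝ (fun y => fderiv ℝ u y (e i)) x (e i) =
      -∫ x, fderiv ℝ φ x (e i) * fderiv ℝ u x (e i) := fun i =>
    integral_mul_fderiv_eq_neg_fderiv_mul_of_integrable (hint_right i) (hint_left i)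
      ((hφ.continuous.mul (hdu i).continuous).integrable_of_hasCompactSupport hφc.mul_right)
      (fun x _ => hφ.differentiable one_ne_zero x)
      (fun x _ => (hdu i).differentiable one_ne_zero x)
  calc ∫ x, φ x * lap u x
      = ∑ i, ∫ x, φ x * fderiv ℝ (fun y => fderiv ℝ u y (e i)) x (e i) := by
        simp only [lap, Finset.mul_sum]
        exact integral_finsetSum _ fun i _ => hint_left i
    _ = -∫ x, ∑ i, fderiv ℝ φ x (e i) * fderiv ℝ u x (e i) := by
        rw [Finset.sum_congr rfl fun i _ => hibp i, Finset.sum_neg_distrib,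
          integral_finsetSum _ fun i _ => hint_right i]
    _ = -∫ x, fderiv ℝ φ x (gradient u x) := by
        simp only [e, sum_apply_single_mul_fderiv]

end Green

theorem integral_mul_lap_of_integrable {n : ℕ} {w u : EuclideanSpace ℝ (Fin n) → ℝ}
    (hw : ContDiff ℝ 1 w) (hu : ContDiff ℝ 2 u)
    (hw_lap : Integrable fun x => w x * lap u x)
    (hw_deriv : Integrable fun x => fderiv ℝ w x (gradient u x))
    (hw_grad : Integrable fun x => w x * ‖gradient u x‖) :
    ∫ x, w x * lap u x = -∫ x, fderiv ℝ w x (gradient u x) := by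
  let χ : ℕ → EuclideanSpace ℝ (Fin n) → ℝ := fun j => bumpCutoff default j
  obtain ⟨C, hC⟩ :=
    exists_norm_fderiv_bumpCutoff_le (default : ContDiffBump (0 : EuclideanSpace ℝ (Fin n)))
  have hχ : ∀ j, ContDiff ℝ 1 (χ j) := fun j => contDiff_bumpCutoff _ _
  have hχ_le : ∀ j x, ‖χ j x‖ ≤ 1 := fun j x => by
    obtain ⟨h0, h1⟩ := bumpCutoff_mem_Icc default (j : ℝ) x
    rwa [Real.norm_eq_abs, abs_of_nonneg h0]
  have hχ_lim : ∀ x, Tendsto (fun j => χ j x) atTop (𝓝 1) := fun x =>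
    (tendsto_bumpCutoff_atTop _ x).comp tendsto_natCast_atTop_atTop
  have hχ_meas : ∀ j, AEStronglyMeasurable (χ j) := fun j =>
    (hχ j).continuous.aestronglyMeasurable
  have hgrad := (hu.of_le one_le_two).continuous_gradient
  have herr_le : ∀ j : ℕ, ∀ x, ‖w x * fderiv ℝ (χ j) x (gradient u x)‖ ≤
      C / j * ‖w x * ‖gradient u x‖‖ := fun j x => by
    have := (fderiv ℝ (χ j) x).le_of_opNorm_le (by simpa using hC j x) (gradient u x)
    rw [norm_mul, norm_mul, norm_norm]
    exact (mul_le_mul_of_nonneg_left this (norm_nonneg _)).trans_eq (by ring)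
  have herr :
      Tendsto (fun j : ℕ => ∫ x, w x * fderiv ℝ (χ j) x (gradient u x)) atTop (𝓝 0) := by
    refine squeeze_zero_norm (fun j => (norm_integral_le_of_norm_le (hw_grad.norm.const_mul _)
      (Eventually.of_forall (herr_le j))).trans_eq (integral_const_mul _ _)) ?_
    simpa [div_mul_eq_mul_div] using
      tendsto_const_div_atTop_nhds_zero_nat (C * ∫ x, ‖w x * ‖gradient u x‖‖)
  have hgreen : ∀ j : ℕ, j ≠ 0 → ∫ x, χ j x * (w x * lap u x) =
      -(∫ x, χ j x * fderiv ℝ w x (gradient u x)) -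
        ∫ x, w x * fderiv ℝ (χ j) x (gradient u x) := fun j hj => by
    have hφ : ContDiff ℝ 1 (fun x => χ j x * w x) := (hχ j).mul hw
    have := integral_mul_lap_of_hasCompactSupport hφ
      (hasCompactSupport_bumpCutoff _ (Nat.cast_ne_zero.2 hj)).mul_right hu
    have hint₁ : Integrable fun x => χ j x * fderiv ℝ w x (gradient u x) :=
      hw_deriv.bdd_mul (hχ_meas j) (Eventually.of_forall (hχ_le j))
    have hint₂ : Integrable fun x => w x * fderiv ℝ (χ j) x (gradient u x) :=
      (hw_grad.norm.const_mul _).mono' (hw.continuous.mul (((hχ j).continuous_fderiv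
        one_ne_zero).clm_apply hgrad)).aestronglyMeasurable (Eventually.of_forall (herr_le j))
    simp only [fderiv_fun_mul ((hχ j).differentiable one_ne_zero _)
      (hw.differentiable one_ne_zero _), add_apply, smul_apply, smul_eq_mul, mul_assoc] at this
    rw [this, integral_add hint₁ hint₂, neg_add, sub_eq_add_neg]
  refine tendsto_nhds_unique (tendsto_integral_mul_of_tendsto_one hw_lap hχ_meas hχ_le hχ_lim) ?_
  simpa using ((tendsto_integral_mul_of_tendsto_one hw_deriv hχ_meas hχ_le hχ_lim).neg.sub
    herr).congr' ((eventually_ne_atTop 0).mono fun j hj => (hgreen j hj).symm)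

theorem norm_fderiv_comp_norm_sq_div_le {E : Type*} [NormedAddCommGroup E]
    [InnerProductSpace ℝ E] {ρ : ℝ → ℝ} {c₀ m : ℝ} (hρ : Differentiable ℝ ρ)
    (hρ_one : ∀ s, 2 ≤ s → ρ s = 1) (hρ' : ∀ s, 0 ≤ s → |deriv ρ s| ≤ c₀) (hm : 0 < m)
    (x : E) : ‖fderiv ℝ (fun y => ρ (‖y‖ ^ 2 / m ^ 2)) x‖ ≤ 2 * √2 * c₀ / m := by
  set s := ‖x‖ ^ 2 / m ^ 2
  have hc₀ : 0 ≤ c₀ := (abs_nonneg _).trans (hρ' 0 le_rfl)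
  have hderiv : HasFDerivAt (fun y : E => ρ (‖y‖ ^ 2 / m ^ 2))
      ((2 / m ^ 2 * deriv ρ s) • innerSL ℝ x) x := by
    refine (((hρ s).hasDerivAt.comp (‖x‖ ^ 2)
      ((hasDerivAt_id (‖x‖ ^ 2)).div_const (m ^ 2))).comp_hasFDerivAt x
      (hasStrictFDerivAt_norm_sq x).hasFDerivAt).congr_fderiv ?_
    ext v
    simp only [smul_apply, innerSL_apply_apply, smul_eq_mul, nsmul_eq_mul]
    ring
  have hkey : |deriv ρ s| * ‖x‖ ≤ c₀ * (√2 * m) := by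
    by_cases hs : s ≤ 2
    · have hx : ‖x‖ ≤ √2 * m := by
        rw [← Real.sqrt_sq hm.le, ← Real.sqrt_mul zero_le_two]
        exact Real.le_sqrt_of_sq_le ((div_le_iff₀ (by positivity)).1 hs)
      exact mul_le_mul (hρ' s (by positivity)) hx (norm_nonneg x) hc₀
    · have hρ_const : ρ =ᶠ[𝓝 s] fun _ => 1 :=
        eventually_of_mem (Ioi_mem_nhds (not_le.1 hs)) fun t ht => hρ_one t (le_of_lt ht)
      rw [hρ_const.deriv_eq, deriv_const, abs_zero, zero_mul]
      positivity
  rw [hderiv.fderiv, norm_smul, innerSL_apply_norm, norm_mul, mul_assoc, Real.norm_eq_abs,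
    abs_of_pos (by positivity), Real.norm_eq_abs]
  calc 2 / m ^ 2 * (|deriv ρ s| * ‖x‖) ≤ 2 / m ^ 2 * (c₀ * (√2 * m)) := by gcongr
    _ = 2 * √2 * c₀ / m := by field_simp

theorem integral_mul_mul_lap_eq {n : ℕ} {ψ u : EuclideanSpace ℝ (Fin n) → ℝ} {A B : ℝ}
    (hψ : ContDiff ℝ 1 ψ) (hψ_le : ∀ x, ‖ψ x‖ ≤ A) (hDψ : ∀ x, ‖fderiv ℝ ψ x‖ ≤ B)
    (hu : ContDiff ℝ 2 u) (hu_L2 : MemLp u 2 volume) (hgrad_L2 : MemLp (gradient u) 2 volume)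
    (hlap_L2 : MemLp (lap u) 2 volume) :
    ∫ x, ψ x * (u x * lap u x) =
      -(∫ x, ψ x * ‖gradient u x‖ ^ 2) - ∫ x, u x * fderiv ℝ ψ x (gradient u x) := by
  have hψ_meas : AEStronglyMeasurable ψ := hψ.continuous.aestronglyMeasurable
  have hψ_le' : ∀ᵐ x, ‖ψ x‖ ≤ A := Eventually.of_forall hψ_le
  have hDw (x) : fderiv ℝ (fun x => ψ x * u x) x (gradient u x) =
      ψ x * ‖gradient u x‖ ^ 2 + u x * fderiv ℝ ψ x (gradient u x) := by
    rw [fderiv_fun_mul (hψ.differentiable one_ne_zero x) (hu.differentiable two_ne_zero x),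
      add_apply, smul_apply, smul_apply, smul_eq_mul, smul_eq_mul, ← inner_gradient_left,
      real_inner_self_eq_norm_sq]
  have hint_lap : Integrable fun x => u x * lap u x := hu_L2.integrable_mul hlap_L2
  have hint_u_grad : Integrable fun x => u x * ‖gradient u x‖ :=
    hu_L2.integrable_mul hgrad_L2.norm
  have hint_grad : Integrable fun x => ψ x * ‖gradient u x‖ ^ 2 :=
    hgrad_L2.norm.integrable_sq.bdd_mul hψ_meas hψ_le'
  have hint_cross : Integrable fun x => u x * fderiv ℝ ψ x (gradient u x) := by
    refine (hint_u_grad.norm.const_mul B).mono'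
      (hu.continuous.mul ((hψ.continuous_fderiv one_ne_zero).clm_apply
        (hu.of_le one_le_two).continuous_gradient)).aestronglyMeasurable
      (Eventually.of_forall fun x => ?_)
    rw [norm_mul, norm_mul, norm_norm, mul_left_comm]
    exact mul_le_mul_of_nonneg_left ((fderiv ℝ ψ x).le_of_opNorm_le (hDψ x) _) (norm_nonneg _)
  have hibp := integral_mul_lap_of_integrable (hψ.mul (hu.of_le one_le_two)) hu
    (by simpa only [mul_assoc] using hint_lap.bdd_mul hψ_meas hψ_le')
    ((hint_grad.add hint_cross).congr (Eventually.of_forall fun x => (hDw x).symm))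
    (by simpa only [mul_assoc] using hint_u_grad.bdd_mul hψ_meas hψ_le')
  simp only [mul_assoc] at hibp
  rw [hibp, integral_congr_ae (Eventually.of_forall hDw), integral_add hint_grad hint_cross,
    neg_add, sub_eq_add_neg]

theorem stmt10_general (n : ℕ) (c₀ : ℝ) (ρ : ℝ → ℝ)
    (hρ_C1 : ContDiff ℝ 1 ρ)
    (hρ_range : ∀ s : ℝ, 0 ≤ s → 0 ≤ ρ s ∧ ρ s ≤ 1)
    (hρ_one : ∀ s : ℝ, 2 ≤ s → ρ s = 1)
    (hρ' : ∀ s : ℝ, 0 ≤ s → |deriv ρ s| ≤ c₀) :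
    ∀ (k : ℝ), 0 < k →
      ∀ u : EuclideanSpace ℝ (Fin n) → ℝ,
        ContDiff ℝ 2 u →
        MemLp u 2 volume →
        MemLp (fun x => gradient u x) 2 volume →
        MemLp (lap u) 2 volume →
        -(∫ x, ρ (‖x‖ ^ 2 / k ^ 2) * (u x * lap u x)) ≥
          (∫ x, ρ (‖x‖ ^ 2 / k ^ 2) * ‖gradient u x‖ ^ 2)
            - (2 * Real.sqrt 2 * c₀ / k) * ((∫ x, (u x) ^ 2) + (∫ x, ‖gradient u x‖ ^ 2)) := by
  intro k hk u hu hu_L2 hgrad_L2 hlap_L2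
  have hψ : ContDiff ℝ 1 fun x : EuclideanSpace ℝ (Fin n) => ρ (‖x‖ ^ 2 / k ^ 2) :=
    hρ_C1.comp ((contDiff_norm_sq ℝ).div_const _)
  have hψ_le (x : EuclideanSpace ℝ (Fin n)) : ‖ρ (‖x‖ ^ 2 / k ^ 2)‖ ≤ 1 := by
    obtain ⟨h0, h1⟩ := hρ_range (‖x‖ ^ 2 / k ^ 2) (by positivity)
    rwa [Real.norm_eq_abs, abs_of_nonneg h0]
  have hDψ (x : EuclideanSpace ℝ (Fin n)) :
      ‖fderiv ℝ (fun y => ρ (‖y‖ ^ 2 / k ^ 2)) x‖ ≤ 2 * √2 * c₀ / k :=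
    norm_fderiv_comp_norm_sq_div_le (hρ_C1.differentiable one_ne_zero) hρ_one hρ' hk x
  rw [integral_mul_mul_lap_eq hψ hψ_le hDψ hu hu_L2 hgrad_L2 hlap_L2]
  linarith [abs_le.1 (abs_integral_mul_apply_le hu_L2 hgrad_L2 hDψ)]

/-- Cut-off integration-by-parts estimate: for the cut-off family
`ρ_k(x) = ρ(|x|²/k²)` (where `ρ : [0,∞) → [0,1]` is `C¹`, vanishes on `[0,1]`, equals `1` on
`[2,∞)` and `|ρ′| ≤ c₀`), every `u ∈ C²` with `u, ∇u, Δu ∈ L²(ℝ^n)` satisfies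
`−∫ ρ_k u Δu ≥ ∫ ρ_k |∇u|² − (2√2 c₀ / k)(‖u‖₂² + ‖∇u‖₂²)`. -/
theorem stmt10 (n : ℕ) (c₀ : ℝ) (hc₀ : 0 < c₀) (ρ : ℝ → ℝ)
    (hρ_C1 : ContDiff ℝ 1 ρ)
    (hρ_range : ∀ s : ℝ, 0 ≤ s → 0 ≤ ρ s ∧ ρ s ≤ 1)
    (hρ_zero : ∀ s : ℝ, s ≤ 1 → ρ s = 0)
    (hρ_one : ∀ s : ℝ, 2 ≤ s → ρ s = 1)
    (hρ' : ∀ s : ℝ, 0 ≤ s → |deriv ρ s| ≤ c₀) :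
    ∀ (k : ℝ), 0 < k →
      ∀ u : EuclideanSpace ℝ (Fin n) → ℝ,
        ContDiff ℝ 2 u →
        MemLp u 2 volume →
        MemLp (fun x => gradient u x) 2 volume →
        MemLp (lap u) 2 volume →
        -(∫ x, ρ (‖x‖ ^ 2 / k ^ 2) * (u x * lap u x)) ≥
          (∫ x, ρ (‖x‖ ^ 2 / k ^ 2) * ‖gradient u x‖ ^ 2)
            - (2 * Real.sqrt 2 * c₀ / k) * ((∫ x, (u x) ^ 2) + (∫ x, ‖gradient u x‖ ^ 2)) :=
  stmt10_general n c₀ ρ hρ_C1 hρ_range hρ_one hρ'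
end
end
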